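/- Let μ be the independent Bernoulli measure on Ω = {1,2}^ℕ with marginal weights (p₁, p₂) and ν the independent Bernoulli measure with marginal weights (q₁, q₂), where p₁ + p₂ = 1 = q₁ + q₂, all weights are nonnegative, and p₁ ≤ q₁. Then the d̄-distance satisfies d̄(μ, ν) = inf_{λ ∈ J(μ,ν)} λ{(x,y) : x₀ ≠ y₀} = q₁ − p₁ = (1/2)(|q₁ − p₁| + |q₂ − p₂|). -/

import Mathlib

open MeasureTheory

/-- The left shift on `Ω = {1,2}^ℕ` (alphabet `Fin 2`). -/
def shift (x : ℕ → Fin 2) : ℕ → Fin 2 := fun n => x (n + 1)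

/-- `μ` is the independent Bernoulli measure on `{1,2}^ℕ` with weights `(p₁, p₂)`
(symbol `0` has mass `p₁`, symbol `1` has mass `p₂`): all cylinders have product mass. -/
def IsBernoulli (p₁ p₂ : ℝ) (μ : Measure (ℕ → Fin 2)) : Prop :=
  ∀ (n : ℕ) (w : Fin n → Fin 2),
    μ {x | ∀ i : Fin n, x (i : ℕ) = w i} =
      ENNReal.ofReal (∏ i, if w i = 0 then p₁ else p₂)

/-!
Lower bound: for any joining `λ`, the event `y₀ = 0` is contained in `{x₀ = 0} ∪ {x₀ ≠ y₀}`,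
so `q₁ ≤ p₁ + λ{x₀ ≠ y₀}`.

Upper bound: couple a single coordinate monotonically, putting masses `p₁, q₁ - p₁, q₂` on
`(0,0), (1,0), (1,1)`, and take the i.i.d. product of this coupling along `ℕ`. It is
shift-invariant since an i.i.d. product is, its marginals are the i.i.d. products of the
one-coordinate marginals, which are `μ` and `ν` because a finite measure on `{1,2}^ℕ` is determined
by its values on the cylinders fixing an initial word, and its disagreement probability is
`q₁ - p₁`.
-/

open Set

section WordCylinder

variable {α : Type*}

def wordCylinder {n : ℕ} (w : Fin n → α) : Set (ℕ → α) := {x | ∀ i : Fin n, x i = w i}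

def wordCylinders (α : Type*) : Set (Set (ℕ → α)) :=
  {S | ∃ n, ∃ w : Fin n → α, wordCylinder w = S}

theorem wordCylinder_inter_of_le {n m : ℕ} (hnm : n ≤ m) (v : Fin n → α) (w : Fin m → α)
    (h : (wordCylinder v ∩ wordCylinder w).Nonempty) :
    wordCylinder v ∩ wordCylinder w = wordCylinder w := by
  obtain ⟨z, hzv, hzw⟩ := h
  refine inter_eq_self_of_subset_right fun x hx i => ?_
  have hi : (i : ℕ) < m := i.2.trans_le hnm
  exact (hx ⟨i, hi⟩).trans ((hzw ⟨i, hi⟩).symm.trans (hzv i))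

theorem isPiSystem_wordCylinders : IsPiSystem (wordCylinders α) := by
  rintro _ ⟨n, v, rfl⟩ _ ⟨m, w, rfl⟩ hne
  rcases le_total n m with h | h
  · exact ⟨m, w, (wordCylinder_inter_of_le h v w hne).symm⟩
  · rw [inter_comm] at hne ⊢
    exact ⟨n, v, (wordCylinder_inter_of_le h w v hne).symm⟩

theorem preimage_apply_singleton_eq_iUnion_wordCylinder (i : ℕ) (c : α) :
    (fun x : ℕ → α => x i) ⁻¹' {c} =
      ⋃ (w : Fin (i + 1) → α) (_ : w (Fin.last i) = c), wordCylinder w := by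
  ext x
  simp only [mem_preimage, mem_singleton_iff, mem_iUnion]
  refine ⟨fun hx => ⟨fun j => x j, hx, fun j => rfl⟩, ?_⟩
  rintro ⟨w, rfl, hxw⟩
  exact hxw (Fin.last i)

variable [MeasurableSpace α] [MeasurableSingletonClass α]

theorem measurableSet_wordCylinder {n : ℕ} (w : Fin n → α) :
    MeasurableSet (wordCylinder w) := by
  have : wordCylinder w = ⋂ i : Fin n, (fun x : ℕ → α => x i) ⁻¹' {w i} := by
    ext x; simp [wordCylinder]
  rw [this]
  exact .iInter fun i => measurable_pi_apply _ (measurableSet_singleton _)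

theorem generateFrom_wordCylinders [Countable α] :
    MeasurableSpace.generateFrom (wordCylinders α) = MeasurableSpace.pi := by
  refine le_antisymm (MeasurableSpace.generateFrom_le ?_) (iSup_le fun i => ?_)
  · rintro _ ⟨n, w, rfl⟩
    exact measurableSet_wordCylinder w
  · refine MeasurableSpace.comap_le_iff_le_map.2
      (@measurable_to_countable' α _ _ _ (.generateFrom _) _ fun c => ?_)
    rw [preimage_apply_singleton_eq_iUnion_wordCylinder]
    exact .iUnion fun w => .iUnion fun _ => MeasurableSpace.measurableSet_generateFrom ⟨_, w, rfl⟩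

theorem infinitePi_wordCylinder (κ : Measure α) [IsProbabilityMeasure κ] {n : ℕ}
    (w : Fin n → α) : Measure.infinitePi (fun _ => κ) (wordCylinder w) = ∏ i, κ {w i} := by
  have : wordCylinder w =
      (Finset.range n : Set ℕ).pi fun i => if h : i < n then {w ⟨i, h⟩} else univ := by
    ext x
    simp only [wordCylinder, Fin.forall_iff, mem_ofPred_eq, Finset.coe_range, mem_pi, mem_Iio]
    exact forall₂_congr fun i h => by simp [h]
  rw [this, Measure.infinitePi_pi _ fun i _ => by split_ifs <;> measurability, Finset.prod_range]
  simp

end WordCylinder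

theorem infinitePi_map_shift {α : Type*} [MeasurableSpace α] (κ : Measure α)
    [IsProbabilityMeasure κ] :
    (Measure.infinitePi fun _ : ℕ => κ).map (fun x n => x (n + 1)) =
      Measure.infinitePi fun _ => κ := by
  refine Measure.eq_infinitePi _ fun s t ht => ?_
  have hpre : (fun x : ℕ → α => fun n => x (n + 1)) ⁻¹' (s : Set ℕ).pi t =
      ((s.map (addRightEmbedding 1) : Finset ℕ) : Set ℕ).pi (fun n => t (n - 1)) := by
    ext x; simp
  rw [Measure.map_apply (by fun_prop) (.pi s.countable_toSet fun i _ => ht i), hpre,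
    Measure.infinitePi_pi _ (fun i _ => ht _), Finset.prod_map]
  simp

section IidJoining

variable {α β : Type*} [MeasurableSpace α] [MeasurableSpace β]

noncomputable def iidJoining (κ : Measure (α × β)) : Measure ((ℕ → α) × (ℕ → β)) :=
  (Measure.infinitePi fun _ : ℕ => κ).map (MeasurableEquiv.arrowProdEquivProdArrow α β ℕ)

variable (κ : Measure (α × β)) [IsProbabilityMeasure κ]

instance : IsProbabilityMeasure (iidJoining κ) :=
  Measure.isProbabilityMeasure_map (MeasurableEquiv.measurable _).aemeasurable

theorem map_fst_iidJoining :
    (iidJoining κ).map Prod.fst = Measure.infinitePi fun _ => κ.map Prod.fst := by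
  rw [iidJoining, Measure.map_map measurable_fst (MeasurableEquiv.measurable _),
    ← Measure.infinitePi_map_pi _ fun _ => measurable_fst]
  rfl

theorem map_snd_iidJoining :
    (iidJoining κ).map Prod.snd = Measure.infinitePi fun _ => κ.map Prod.snd := by
  rw [iidJoining, Measure.map_map measurable_snd (MeasurableEquiv.measurable _),
    ← Measure.infinitePi_map_pi _ fun _ => measurable_snd]
  rfl

theorem iidJoining_map_shift :
    (iidJoining κ).map (Prod.map (fun x n => x (n + 1)) (fun y n => y (n + 1))) =
      iidJoining κ := by
  rw [iidJoining, Measure.map_map (by fun_prop) (MeasurableEquiv.measurable _)]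
  conv_rhs => rw [← infinitePi_map_shift κ]
  rw [Measure.map_map (MeasurableEquiv.measurable _) (by fun_prop)]
  rfl

theorem iidJoining_apply_preimage_eval (n : ℕ) {s : Set (α × β)} (hs : MeasurableSet s) :
    iidJoining κ ((fun p => (p.1 n, p.2 n)) ⁻¹' s) = κ s := by
  rw [← Measure.map_apply (by fun_prop) hs, iidJoining,
    Measure.map_map (by fun_prop) (MeasurableEquiv.measurable _)]
  exact congrFun (congrArg _ (Measure.infinitePi_map_eval _ n)) s

end IidJoining

section Bernoulli

variable {p₁ p₂ : ℝ} {μ : Measure (ℕ → Fin 2)}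

theorem IsBernoulli.isProbabilityMeasure (hμ : IsBernoulli p₁ p₂ μ) : IsProbabilityMeasure μ :=
  ⟨by simpa using hμ 0 Fin.elim0⟩

theorem IsBernoulli.ext {ν : Measure (ℕ → Fin 2)} (hμ : IsBernoulli p₁ p₂ μ)
    (hν : IsBernoulli p₁ p₂ ν) : μ = ν := by
  have := hμ.isProbabilityMeasure
  have := hν.isProbabilityMeasure
  refine ext_of_generate_finite _ generateFrom_wordCylinders.symm isPiSystem_wordCylinders
    ?_ (by simp)
  rintro _ ⟨n, w, rfl⟩
  exact (hμ n w).trans (hν n w).symm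

theorem IsBernoulli.measure_eval_zero_eq_zero (hμ : IsBernoulli p₁ p₂ μ) :
    μ {x | x 0 = 0} = ENNReal.ofReal p₁ := by
  simpa using hμ 1 fun _ => 0

theorem isBernoulli_infinitePi (hp₁ : 0 ≤ p₁) (hp₂ : 0 ≤ p₂) (β : Measure (Fin 2))
    [IsProbabilityMeasure β] (h₀ : β {0} = ENNReal.ofReal p₁) (h₁ : β {1} = ENNReal.ofReal p₂) :
    IsBernoulli p₁ p₂ (Measure.infinitePi fun _ => β) := by
  intro n w
  rw [ENNReal.ofReal_prod_of_nonneg fun i _ => by split_ifs <;> assumption]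
  refine (infinitePi_wordCylinder β w).trans (Finset.prod_congr rfl fun i _ => ?_)
  rcases Fin.exists_fin_two.mp ⟨w i, rfl⟩ with h | h <;> simp [h, h₀, h₁]

end Bernoulli

theorem measure_map_snd_eval_zero_le {α : Type*} [MeasurableSpace α]
    [MeasurableSingletonClass α] (lam : Measure ((ℕ → α) × (ℕ → α))) (c : α) :
    lam.map Prod.snd {y | y 0 = c} ≤ lam.map Prod.fst {x | x 0 = c} + lam {p | p.1 0 ≠ p.2 0} := by
  have hc : MeasurableSet {x : ℕ → α | x 0 = c} :=
    measurableSet_singleton c |>.preimage (measurable_pi_apply 0)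
  rw [Measure.map_apply measurable_snd hc, Measure.map_apply measurable_fst hc]
  refine (measure_mono fun p hp => ?_).trans (measure_union_le _ _)
  by_cases h : p.1 0 = p.2 0
  · exact Or.inl (h.trans hp)
  · exact Or.inr h

theorem sub_le_measure_ne_of_isBernoulli {p₁ p₂ q₁ q₂ : ℝ} (hp₁ : 0 ≤ p₁) (hq₁ : 0 ≤ q₁)
    {lam : Measure ((ℕ → Fin 2) × (ℕ → Fin 2))} [IsFiniteMeasure lam]
    (hμ : IsBernoulli p₁ p₂ (lam.map Prod.fst)) (hν : IsBernoulli q₁ q₂ (lam.map Prod.snd)) :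
    q₁ - p₁ ≤ (lam {p | p.1 0 ≠ p.2 0}).toReal := by
  have h := measure_map_snd_eval_zero_le lam 0
  rw [hμ.measure_eval_zero_eq_zero, hν.measure_eval_zero_eq_zero] at h
  have := ENNReal.toReal_mono (by finiteness) h
  rw [ENNReal.toReal_add (by finiteness) (by finiteness), ENNReal.toReal_ofReal hp₁,
    ENNReal.toReal_ofReal hq₁] at this
  linarith

section MonotoneCoupling

noncomputable def monotoneCoupling (p q : ℝ) : Measure (Fin 2 × Fin 2) :=
  ENNReal.ofReal p • Measure.dirac (0, 0) + ENNReal.ofReal (q - p) • Measure.dirac (1, 0) +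
    ENNReal.ofReal (1 - q) • Measure.dirac (1, 1)

variable {p q : ℝ}

theorem isProbabilityMeasure_monotoneCoupling (hp : 0 ≤ p) (hpq : p ≤ q) (hq : q ≤ 1) :
    IsProbabilityMeasure (monotoneCoupling p q) := by
  constructor
  rw [show (1 : ENNReal) = ENNReal.ofReal (p + (q - p) + (1 - q)) by norm_num,
    ENNReal.ofReal_add (by linarith) (by linarith), ENNReal.ofReal_add hp (by linarith)]
  simp [monotoneCoupling]

theorem monotoneCoupling_map_fst_apply_zero : (monotoneCoupling p q).map Prod.fst {0} =
    ENNReal.ofReal p := by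
  rw [Measure.map_apply measurable_fst (measurableSet_singleton 0)]
  simp [monotoneCoupling]

theorem monotoneCoupling_map_fst_apply_one (hpq : p ≤ q) (hq : q ≤ 1) :
    (monotoneCoupling p q).map Prod.fst {1} = ENNReal.ofReal (1 - p) := by
  rw [Measure.map_apply measurable_fst (measurableSet_singleton 1),
    show 1 - p = (q - p) + (1 - q) by ring, ENNReal.ofReal_add (by linarith) (by linarith)]
  simp [monotoneCoupling]

theorem monotoneCoupling_map_snd_apply_zero (hp : 0 ≤ p) (hpq : p ≤ q) :
    (monotoneCoupling p q).map Prod.snd {0} = ENNReal.ofReal q := by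
  rw [Measure.map_apply measurable_snd (measurableSet_singleton 0),
    show q = p + (q - p) by ring, ENNReal.ofReal_add hp (by linarith)]
  simp [monotoneCoupling]

theorem monotoneCoupling_map_snd_apply_one : (monotoneCoupling p q).map Prod.snd {1} =
    ENNReal.ofReal (1 - q) := by
  rw [Measure.map_apply measurable_snd (measurableSet_singleton 1)]
  simp [monotoneCoupling]

theorem monotoneCoupling_apply_ne : monotoneCoupling p q {a | a.1 ≠ a.2} =
    ENNReal.ofReal (q - p) := by
  simp [monotoneCoupling]

end MonotoneCoupling

theorem dbar_of_bernoulli_general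
    (p₁ p₂ q₁ q₂ : ℝ)
    (hp₁ : 0 ≤ p₁) (hq₂ : 0 ≤ q₂)
    (hp : p₁ + p₂ = 1) (hq : q₁ + q₂ = 1) (hpq : p₁ ≤ q₁)
    (μ ν : Measure (ℕ → Fin 2))
    (hμ : IsBernoulli p₁ p₂ μ) (hν : IsBernoulli q₁ q₂ ν) :
    sInf {r : ℝ | ∃ lam : Measure ((ℕ → Fin 2) × (ℕ → Fin 2)),
        IsProbabilityMeasure lam ∧
        lam.map Prod.fst = μ ∧ lam.map Prod.snd = ν ∧
        lam.map (Prod.map shift shift) = lam ∧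
        r = (lam {p | p.1 0 ≠ p.2 0}).toReal} = q₁ - p₁ ∧
    q₁ - p₁ = (1 / 2) * (|q₁ - p₁| + |q₂ - p₂|) := by
  obtain rfl : p₂ = 1 - p₁ := by linarith
  obtain rfl : q₂ = 1 - q₁ := by linarith
  have hq₁ : q₁ ≤ 1 := by linarith
  have := isProbabilityMeasure_monotoneCoupling hp₁ hpq hq₁
  set κ := monotoneCoupling p₁ q₁
  have := Measure.isProbabilityMeasure_map (μ := κ) measurable_fst.aemeasurable
  have := Measure.isProbabilityMeasure_map (μ := κ) measurable_snd.aemeasurable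
  have hfst : (iidJoining κ).map Prod.fst = μ := by
    rw [map_fst_iidJoining]
    exact (isBernoulli_infinitePi hp₁ (by linarith) _ monotoneCoupling_map_fst_apply_zero
      (monotoneCoupling_map_fst_apply_one hpq hq₁)).ext hμ
  have hsnd : (iidJoining κ).map Prod.snd = ν := by
    rw [map_snd_iidJoining]
    exact (isBernoulli_infinitePi (hp₁.trans hpq) hq₂ _
      (monotoneCoupling_map_snd_apply_zero hp₁ hpq) monotoneCoupling_map_snd_apply_one).ext hν
  have hne : (iidJoining κ {p | p.1 0 ≠ p.2 0}).toReal = q₁ - p₁ := by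
    change (iidJoining κ ((fun p => (p.1 0, p.2 0)) ⁻¹' {a | a.1 ≠ a.2})).toReal = _
    rw [iidJoining_apply_preimage_eval κ 0 (by measurability),
      monotoneCoupling_apply_ne, ENNReal.toReal_ofReal (sub_nonneg.2 hpq)]
  refine ⟨IsLeast.csInf_eq ⟨⟨iidJoining κ, inferInstance, hfst, hsnd, iidJoining_map_shift κ,
    hne.symm⟩, ?_⟩, ?_⟩
  · rintro r ⟨lam, _, rfl, rfl, -, rfl⟩
    exact sub_le_measure_ne_of_isBernoulli hp₁ (hp₁.trans hpq) hμ hν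
  · rw [abs_of_nonneg (sub_nonneg.2 hpq), abs_of_nonpos (by linarith)]
    ring

/-- for independent Bernoulli measures `μ` (weights `(p₁,p₂)`) and `ν`
(weights `(q₁,q₂)`) with `p₁ ≤ q₁`, the `d̄`-distance (the infimum over joinings of the
probability of disagreement of the zeroth coordinates) equals
`q₁ − p₁ = (1/2)(|q₁ − p₁| + |q₂ − p₂|)`. -/
theorem dbar_of_bernoulli
    (p₁ p₂ q₁ q₂ : ℝ)
    (hp₁ : 0 ≤ p₁) (hp₂ : 0 ≤ p₂) (hq₁ : 0 ≤ q₁) (hq₂ : 0 ≤ q₂)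
    (hp : p₁ + p₂ = 1) (hq : q₁ + q₂ = 1) (hpq : p₁ ≤ q₁)
    (μ ν : Measure (ℕ → Fin 2))
    [IsProbabilityMeasure μ] [IsProbabilityMeasure ν]
    (hμ : IsBernoulli p₁ p₂ μ) (hν : IsBernoulli q₁ q₂ ν) :
    sInf {r : ℝ | ∃ lam : Measure ((ℕ → Fin 2) × (ℕ → Fin 2)),
        IsProbabilityMeasure lam ∧
        lam.map Prod.fst = μ ∧ lam.map Prod.snd = ν ∧
        lam.map (Prod.map shift shift) = lam ∧
        r = (lam {p | p.1 0 ≠ p.2 0}).toReal} = q₁ - p₁ ∧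
    q₁ - p₁ = (1 / 2) * (|q₁ - p₁| + |q₂ - p₂|) :=
  dbar_of_bernoulli_general p₁ p₂ q₁ q₂ hp₁ hq₂ hp hq hpq μ ν hμ hν
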